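/- A unitary operator on a complex Hilbert space is weakly l-sequentially supercyclic if and only if its adjoint (equivalently, its inverse) is weakly l-sequentially supercyclic. -/

import Mathlib

open Filter Topology ContinuousLinearMap

variable {H : Type*} [NormedAddCommGroup H] [InnerProductSpace ℂ H]

local notation "⟪" x ", " y "⟫" => @inner ℂ _ _ x y
local notation "conj'" => starRingEnd ℂ


/-- Weak convergence of a sequence. -/
def WeaklyConvSeq (u : ℕ → H) (x : H) : Prop :=
  ∀ f : StrongDual ℂ H, Tendsto (fun k => f (u k)) atTop (nhds (f x))

/-- `T` is weakly l-sequentially supercyclic: some vector `y` is such that every `x` is the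
weak limit of a sequence `α_k • T^{n_k} y` along a strictly increasing sequence `n_k`. -/
def WeaklyLSeqSupercyclic (T : H →L[ℂ] H) : Prop :=
  ∃ y : H, ∀ x : H, ∃ (α : ℕ → ℂ) (n : ℕ → ℕ), StrictMono n ∧
    WeaklyConvSeq (fun k => α k • (T ^ n k) y) x

namespace WLSSAux

variable [CompleteSpace H]

noncomputable def orb (U : H →L[ℂ] H) (y : H) : ℤ → H := fun n =>
  if 0 ≤ n then (U ^ n.toNat) y else ((ContinuousLinearMap.adjoint U) ^ (-n).toNat) y

variable {U : H →L[ℂ] H} {y : H}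

lemma JU (hU : U ∈ unitary (H →L[ℂ] H)) (z : H) :
    ContinuousLinearMap.adjoint U (U z) = z := by
  have h := hU.1
  rw [ContinuousLinearMap.star_eq_adjoint] at h
  calc ContinuousLinearMap.adjoint U (U z)
      = ((ContinuousLinearMap.adjoint U) * U) z := rfl
    _ = z := by rw [h]; rfl

lemma UJ (hU : U ∈ unitary (H →L[ℂ] H)) (z : H) :
    U (ContinuousLinearMap.adjoint U z) = z := by
  have h := hU.2
  rw [ContinuousLinearMap.star_eq_adjoint] at h
  calc U (ContinuousLinearMap.adjoint U z)
      = (U * (ContinuousLinearMap.adjoint U)) z := rfl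
    _ = z := by rw [h]; rfl

lemma orb_zero : orb U y 0 = y := by simp [orb]

lemma orb_natCast (m : ℕ) : orb U y (m : ℤ) = (U ^ m) y := by simp [orb]

lemma orb_neg_natCast (m : ℕ) :
    orb U y (-(m : ℤ)) = ((ContinuousLinearMap.adjoint U) ^ m) y := by
  unfold orb
  rcases Nat.eq_zero_or_pos m with h | h
  · subst h; simp
  · have ht : (-(-(m : ℤ))).toNat = m := by omega
    rw [if_neg (by omega), ht]

lemma U_orb (hU : U ∈ unitary (H →L[ℂ] H)) (n : ℤ) :
    U (orb U y n) = orb U y (n + 1) := by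
  unfold orb
  by_cases hn : 0 ≤ n
  · rw [if_pos hn, if_pos (by omega)]
    have ht : (n + 1).toNat = n.toNat + 1 := by omega
    rw [ht, pow_succ']
    rfl
  · rw [if_neg hn]
    have ht : (-n).toNat = (-(n + 1)).toNat + 1 := by omega
    rw [ht, pow_succ']
    rw [ContinuousLinearMap.mul_apply, UJ hU]
    by_cases hn1 : 0 ≤ n + 1
    · have : n + 1 = 0 := by omega
      rw [if_pos hn1, this]
      simp
    · rw [if_neg hn1]

lemma J_orb (hU : U ∈ unitary (H →L[ℂ] H)) (n : ℤ) :
    ContinuousLinearMap.adjoint U (orb U y n) = orb U y (n - 1) := by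
  have h := U_orb (y := y) hU (n - 1)
  rw [sub_add_cancel] at h
  rw [← h, JU hU]

lemma inner_U_U (hU : U ∈ unitary (H →L[ℂ] H)) (a b : H) :
    ⟪U a, U b⟫ = ⟪a, b⟫ := by
  rw [← ContinuousLinearMap.adjoint_inner_left, JU hU]

lemma inner_orb_shift (hU : U ∈ unitary (H →L[ℂ] H)) (m n : ℤ) :
    ⟪orb U y (m + 1), orb U y (n + 1)⟫ = ⟪orb U y m, orb U y n⟫ := by
  rw [← U_orb hU, ← U_orb hU, inner_U_U hU]

lemma inner_orb_add (hU : U ∈ unitary (H →L[ℂ] H)) (m n k : ℤ) :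
    ⟪orb U y (m + k), orb U y (n + k)⟫ = ⟪orb U y m, orb U y n⟫ := by
  induction k using Int.induction_on with
  | zero => simp
  | succ i ih =>
      have := inner_orb_shift (y := y) hU (m + i) (n + i)
      rw [show m + (i + 1 : ℤ) = m + i + 1 by ring, show n + (i + 1 : ℤ) = n + i + 1 by ring,
        this, ih]
  | pred i ih =>
      have := inner_orb_shift (y := y) hU (m + (-i - 1)) (n + (-i - 1))
      rw [show m + (-(i:ℤ) - 1) + 1 = m + -(i:ℤ) by ring,
        show n + (-(i:ℤ) - 1) + 1 = n + -(i:ℤ) by ring] at this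
      rw [← this, ih]

lemma inner_orb (hU : U ∈ unitary (H →L[ℂ] H)) (m n : ℤ) :
    ⟪orb U y m, orb U y n⟫ = ⟪y, orb U y (n - m)⟫ := by
  have := inner_orb_add (y := y) hU 0 (n - m) m
  rw [zero_add, sub_add_cancel, orb_zero] at this
  exact this


lemma conj_inner_y_orb (hU : U ∈ unitary (H →L[ℂ] H)) (k : ℤ) :
    conj' ⟪y, orb U y k⟫ = ⟪y, orb U y (-k)⟫ := by
  rw [inner_conj_symm]
  have := inner_orb (y := y) hU k 0
  rw [zero_sub, orb_zero] at this
  exact this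

noncomputable def Tmap (U : H →L[ℂ] H) (y : H) (c : ℤ →₀ ℂ) : H :=
  c.sum fun n a => a • orb U y n

noncomputable def Cmap (U : H →L[ℂ] H) (y : H) (c : ℤ →₀ ℂ) : H :=
  c.sum fun n a => (conj' a) • orb U y (-n)

lemma Tmap_sub (a b : ℤ →₀ ℂ) : Tmap U y (a - b) = Tmap U y a - Tmap U y b := by
  unfold Tmap
  rw [Finsupp.sum_sub_index]
  intro i b1 b2
  rw [sub_smul]

lemma Cmap_sub (a b : ℤ →₀ ℂ) : Cmap U y (a - b) = Cmap U y a - Cmap U y b := by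
  unfold Cmap
  rw [Finsupp.sum_sub_index]
  intro i b1 b2
  rw [map_sub, sub_smul]

lemma Tmap_single (n : ℕ) (a : ℂ) : Tmap U y (Finsupp.single (n : ℤ) a) = a • (U ^ n) y := by
  unfold Tmap
  rw [Finsupp.sum_single_index (by simp)]
  simp [orb]

lemma Cmap_single (n : ℕ) (a : ℂ) :
    Cmap U y (Finsupp.single (n : ℤ) a) = (conj' a) • ((ContinuousLinearMap.adjoint U) ^ n) y := by
  unfold Cmap
  rw [Finsupp.sum_single_index (by simp)]
  rw [orb_neg_natCast]

lemma inner_Cmap_Cmap (hU : U ∈ unitary (H →L[ℂ] H)) (a b : ℤ →₀ ℂ) :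
    ⟪Cmap U y a, Cmap U y b⟫ = conj' ⟪Tmap U y a, Tmap U y b⟫ := by
  unfold Cmap Tmap Finsupp.sum
  rw [sum_inner, sum_inner, map_sum]
  refine Finset.sum_congr rfl fun m _ => ?_
  rw [inner_sum, inner_sum, map_sum]
  refine Finset.sum_congr rfl fun n _ => ?_
  rw [inner_smul_left, inner_smul_right, inner_smul_left, inner_smul_right, map_mul, map_mul]
  rw [inner_orb hU, inner_orb hU, conj_inner_y_orb hU,
    show -n - -m = -(n - m) by ring]

lemma inner_Tmap_Cmap (hU : U ∈ unitary (H →L[ℂ] H)) (a b : ℤ →₀ ℂ) :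
    ⟪Tmap U y a, Cmap U y b⟫ = conj' ⟪Cmap U y a, Tmap U y b⟫ := by
  unfold Cmap Tmap Finsupp.sum
  rw [sum_inner, sum_inner, map_sum]
  refine Finset.sum_congr rfl fun m _ => ?_
  rw [inner_sum, inner_sum, map_sum]
  refine Finset.sum_congr rfl fun n _ => ?_
  rw [inner_smul_left, inner_smul_right, inner_smul_left, inner_smul_right, map_mul, map_mul]
  rw [inner_orb hU, inner_orb hU, conj_inner_y_orb hU,
    show -n - m = -(n - -m) by ring]
  simp

lemma norm_Cmap (hU : U ∈ unitary (H →L[ℂ] H)) (c : ℤ →₀ ℂ) :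
    ‖Cmap U y c‖ = ‖Tmap U y c‖ := by
  have h := inner_Cmap_Cmap (y := y) hU c c
  rw [inner_self_eq_norm_sq_to_K, inner_self_eq_norm_sq_to_K] at h
  simp only [map_pow, RCLike.conj_ofReal] at h
  have h3 : (‖Cmap U y c‖ : ℝ) ^ 2 = (‖Tmap U y c‖ : ℝ) ^ 2 := by exact_mod_cast h
  nlinarith [norm_nonneg (Cmap U y c), norm_nonneg (Tmap U y c)]

lemma norm_orb (hU : U ∈ unitary (H →L[ℂ] H)) (n : ℤ) : ‖orb U y n‖ = ‖y‖ := by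
  have h := inner_orb (y := y) hU n n
  rw [sub_self, orb_zero, inner_self_eq_norm_sq_to_K, inner_self_eq_norm_sq_to_K] at h
  have h3 : ‖orb U y n‖ ^ 2 = ‖y‖ ^ 2 := by exact_mod_cast h
  nlinarith [norm_nonneg (orb U y n), norm_nonneg y]

lemma wlss_adjoint (U : H →L[ℂ] H) (hU : U ∈ unitary (H →L[ℂ] H))
    (h : WeaklyLSeqSupercyclic U) :
    WeaklyLSeqSupercyclic (ContinuousLinearMap.adjoint U) := by
  obtain ⟨y, hy⟩ := h
  set J := ContinuousLinearMap.adjoint U with hJ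
  -- density of the span of the orbit
  have hKtop : (Submodule.span ℂ (Set.range (orb U y))).topologicalClosure = ⊤ := by
    rw [Submodule.topologicalClosure_eq_top_iff, Submodule.eq_bot_iff]
    intro w hw
    obtain ⟨α, n, hmono, hconv⟩ := hy w
    have h0 : ∀ k, ⟪w, (U ^ n k) y⟫ = 0 := by
      intro k
      have hmem : (U ^ n k) y ∈ Submodule.span ℂ (Set.range (orb U y)) :=
        Submodule.subset_span ⟨(n k : ℤ), by simp [orb]⟩
      have hz := (Submodule.mem_orthogonal _ w).mp hw _ hmem
      rwa [inner_eq_zero_symm] at hz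
    have l1 : Tendsto (fun _ : ℕ => (0 : ℂ)) atTop (nhds ⟪w, w⟫) := by
      have h := hconv (innerSL ℂ w)
      simp only [innerSL_apply_apply, inner_smul_right, h0, mul_zero] at h
      exact h
    have : ⟪w, w⟫ = (0 : ℂ) := tendsto_nhds_unique l1 tendsto_const_nhds
    exact inner_self_eq_zero.mp this
  have hcl : ∀ z : H,
      z ∈ closure ((Submodule.span ℂ (Set.range (orb U y)) : Submodule ℂ H) : Set H) := by
    intro z
    have h1 : z ∈ (Submodule.span ℂ (Set.range (orb U y))).topologicalClosure := by
      rw [hKtop]; exact Submodule.mem_top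
    exact h1
  have happrox : ∀ z : H, ∃ c : ℕ → (ℤ →₀ ℂ),
      Tendsto (fun j => Tmap U y (c j)) atTop (nhds z) := by
    intro z
    obtain ⟨u, humem, hutend⟩ := mem_closure_iff_seq_limit.mp (hcl z)
    have hrep : ∀ j, ∃ c : ℤ →₀ ℂ, Tmap U y c = u j := by
      intro j
      exact Finsupp.mem_span_range_iff_exists_finsupp.mp (humem j)
    choose c hc using hrep
    exact ⟨c, by simpa [hc] using hutend⟩
  refine ⟨y, fun x => ?_⟩
  obtain ⟨g, hg⟩ := happrox x
  -- construct x~ = "C x"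
  have hcau : CauchySeq (fun j => Cmap U y (g j)) := by
    have h1 : CauchySeq (fun j => Tmap U y (g j)) := hg.cauchySeq
    have hdist : ∀ i j, dist (Cmap U y (g i)) (Cmap U y (g j))
        = dist (Tmap U y (g i)) (Tmap U y (g j)) := by
      intro i j
      rw [dist_eq_norm, dist_eq_norm, ← Cmap_sub, norm_Cmap hU, Tmap_sub]
    rw [Metric.cauchySeq_iff] at h1 ⊢
    intro ε hε
    obtain ⟨N, hN⟩ := h1 ε hε
    exact ⟨N, fun i hi j hj => by rw [hdist]; exact hN i hi j hj⟩
  obtain ⟨xt, hxt⟩ := cauchySeq_tendsto_of_complete hcau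
  have P2 : ∀ c : ℤ →₀ ℂ, ⟪Cmap U y c, xt⟫ = conj' ⟪Tmap U y c, x⟫ := by
    intro c
    have l1 : Tendsto (fun j => ⟪Cmap U y c, Cmap U y (g j)⟫) atTop
        (nhds ⟪Cmap U y c, xt⟫) := Filter.Tendsto.inner tendsto_const_nhds hxt
    have l2 : Tendsto (fun j => ⟪Cmap U y c, Cmap U y (g j)⟫) atTop
        (nhds (conj' ⟪Tmap U y c, x⟫)) := by
      have h3 : Tendsto (fun j => ⟪Tmap U y c, Tmap U y (g j)⟫) atTop
          (nhds ⟪Tmap U y c, x⟫) := Filter.Tendsto.inner tendsto_const_nhds hg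
      have h4 := h3.star
      have h5 : (fun j => ⟪Cmap U y c, Cmap U y (g j)⟫)
          = fun j => star ⟪Tmap U y c, Tmap U y (g j)⟫ := by
        funext j
        rw [inner_Cmap_Cmap hU, starRingEnd_apply]
      rw [h5, show conj' ⟪Tmap U y c, x⟫ = star ⟪Tmap U y c, x⟫ from rfl]
      exact h4
    exact tendsto_nhds_unique l1 l2
  obtain ⟨α, n, hmono, hconv⟩ := hy xt
  set a : ℕ → H := fun k => α k • (U ^ n k) y with ha
  set b : ℕ → H := fun k => (conj' (α k)) • (J ^ n k) y with hb
  -- representations via Finsupp singles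
  have hrepa : ∀ k, a k = Tmap U y (Finsupp.single ((n k : ℕ) : ℤ) (α k)) :=
    fun k => (Tmap_single _ _).symm
  have hrepb : ∀ k, b k = Cmap U y (Finsupp.single ((n k : ℕ) : ℤ) (α k)) :=
    fun k => (Cmap_single _ _).symm
  -- boundedness of a (hence b)
  have hbound : ∃ M : ℝ, 0 ≤ M ∧ ∀ k, ‖b k‖ ≤ M := by
    have h1 : ∀ w : H, ∃ C, ∀ k, ‖(innerSL ℂ (a k)) w‖ ≤ C := by
      intro w
      have h3 := (hconv (innerSL ℂ w)).norm
      obtain ⟨C, hC⟩ := h3.bddAbove_range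
      refine ⟨C, fun k => ?_⟩
      have h4 : ‖(innerSL ℂ (a k)) w‖ = ‖(innerSL ℂ w) (a k)‖ := by
        simp only [innerSL_apply_apply]
        exact norm_inner_symm (a k) w
      rw [h4]
      exact hC (Set.mem_range_self k)
    obtain ⟨C', hC'⟩ := banach_steinhaus h1
    refine ⟨max C' 0, le_max_right _ _, fun k => ?_⟩
    have h5 : ‖a k‖ ≤ C' := by
      rw [← innerSL_apply_norm (𝕜 := ℂ)]
      exact hC' k
    have h6 : ‖b k‖ = ‖a k‖ := by
      show ‖(conj' (α k)) • (J ^ n k) y‖ = ‖α k • (U ^ n k) y‖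
      rw [hJ, ← orb_natCast (U := U) (y := y), ← orb_neg_natCast (U := U) (y := y),
        norm_smul, norm_smul, norm_orb hU, norm_orb hU]
      simp
    rw [h6]
    exact le_trans h5 (le_max_left _ _)
  obtain ⟨M0, hM0, hbnd⟩ := hbound
  -- convergence tested against vectors in the span
  have Dlim : ∀ c : ℤ →₀ ℂ, Tendsto (fun k => ⟪Tmap U y c, b k⟫) atTop
      (nhds ⟪Tmap U y c, x⟫) := by
    intro c
    have e1 : ∀ k, ⟪Tmap U y c, b k⟫ = conj' ⟪Cmap U y c, a k⟫ := by
      intro k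
      rw [hrepa k, hrepb k, inner_Tmap_Cmap hU]
    have l2 : Tendsto (fun k => ⟪Cmap U y c, a k⟫) atTop (nhds ⟪Cmap U y c, xt⟫) := by
      simpa using hconv (innerSL ℂ (Cmap U y c))
    have l3 := l2.star
    have e2 : conj' ⟪Cmap U y c, xt⟫ = ⟪Tmap U y c, x⟫ := by
      rw [P2 c]; simp
    rw [← e2]
    have h5 : (fun k => ⟪Tmap U y c, b k⟫) = fun k => star ⟪Cmap U y c, a k⟫ := by
      funext k
      rw [e1 k, starRingEnd_apply]
    rw [h5, show conj' ⟪Cmap U y c, xt⟫ = star ⟪Cmap U y c, xt⟫ from rfl]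
    exact l3
  refine ⟨fun k => conj' (α k), n, hmono, ?_⟩
  intro f
  set w := (InnerProductSpace.toDual ℂ H).symm f with hwdef
  have hw : ∀ u : H, ⟪w, u⟫ = f u := fun u => InnerProductSpace.toDual_symm_apply
  have main : Tendsto (fun k => ⟪w, b k⟫) atTop (nhds ⟪w, x⟫) := by
    rw [Metric.tendsto_atTop]
    intro ε hε
    set M : ℝ := M0 + ‖x‖ + 1 with hM
    have hMpos : 0 < M := by positivity
    obtain ⟨u, humem, hudist⟩ := Metric.mem_closure_iff.mp (hcl w) (ε / (3 * M))
      (by positivity)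
    obtain ⟨c, hc⟩ := Finsupp.mem_span_range_iff_exists_finsupp.mp humem
    have hcdist : ‖w - Tmap U y c‖ < ε / (3 * M) := by
      rw [← dist_eq_norm]
      have : Tmap U y c = u := hc
      rw [this]
      exact hudist
    obtain ⟨N, hN⟩ := (Metric.tendsto_atTop.mp (Dlim c)) (ε / 3) (by positivity)
    refine ⟨N, fun k hk => ?_⟩
    have hdec : ⟪w, b k⟫ - ⟪w, x⟫ = ⟪w - Tmap U y c, b k⟫
        + (⟪Tmap U y c, b k⟫ - ⟪Tmap U y c, x⟫) + ⟪Tmap U y c - w, x⟫ := by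
      rw [inner_sub_left, inner_sub_left]
      ring
    have t1 : ‖⟪w - Tmap U y c, b k⟫‖ ≤ ‖w - Tmap U y c‖ * M := by
      refine le_trans (norm_inner_le_norm _ _) ?_
      have : ‖b k‖ ≤ M := le_trans (hbnd k) (by rw [hM]; nlinarith [norm_nonneg x])
      exact mul_le_mul_of_nonneg_left this (norm_nonneg _)
    have t3 : ‖⟪Tmap U y c - w, x⟫‖ ≤ ‖w - Tmap U y c‖ * M := by
      refine le_trans (norm_inner_le_norm _ _) ?_
      rw [norm_sub_rev]
      have : ‖x‖ ≤ M := by rw [hM]; nlinarith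
      exact mul_le_mul_of_nonneg_left this (norm_nonneg _)
    have t2 : ‖⟪Tmap U y c, b k⟫ - ⟪Tmap U y c, x⟫‖ < ε / 3 := by
      have := hN k hk
      rwa [dist_eq_norm] at this
    have tsmall : ‖w - Tmap U y c‖ * M < ε / 3 := by
      calc ‖w - Tmap U y c‖ * M < (ε / (3 * M)) * M :=
            mul_lt_mul_of_pos_right hcdist hMpos
        _ = ε / 3 := by field_simp
    rw [dist_eq_norm, hdec]
    calc ‖⟪w - Tmap U y c, b k⟫ + (⟪Tmap U y c, b k⟫ - ⟪Tmap U y c, x⟫)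
          + ⟪Tmap U y c - w, x⟫‖
        ≤ ‖⟪w - Tmap U y c, b k⟫‖ + ‖⟪Tmap U y c, b k⟫ - ⟪Tmap U y c, x⟫‖
          + ‖⟪Tmap U y c - w, x⟫‖ := norm_add₃_le
      _ < ε / 3 + ε / 3 + ε / 3 := by
          apply add_lt_add_of_lt_of_le (add_lt_add_of_le_of_lt ?_ t2) ?_
          · exact lt_of_le_of_lt t1 tsmall |>.le
          · exact (lt_of_le_of_lt t3 tsmall).le
      _ = ε := by ring
  have final : Tendsto (fun k => f (b k)) atTop (nhds (f x)) := by
    simpa [hw] using main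
  simpa [hb] using final

end WLSSAux

/-- A unitary operator on a complex Hilbert space is weakly
l-sequentially supercyclic iff its adjoint (= inverse) is. -/
theorem unitary_WLSS_iff_adjoint_WLSS [CompleteSpace H]
    (U : H →L[ℂ] H) (hU : U ∈ unitary (H →L[ℂ] H)) :
    WeaklyLSeqSupercyclic U ↔ WeaklyLSeqSupercyclic (ContinuousLinearMap.adjoint U) := by
  have hU' : ContinuousLinearMap.adjoint U ∈ unitary (H →L[ℂ] H) := by
    rw [← ContinuousLinearMap.star_eq_adjoint]
    exact Unitary.star_mem hU
  constructor
  · exact WLSSAux.wlss_adjoint U hU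
  · intro h
    have h2 := WLSSAux.wlss_adjoint _ hU' h
    rwa [ContinuousLinearMap.adjoint_adjoint] at h2
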